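/- Let M* ⊆ M_1 × ... × M_J be such that for each k and each point m_k ∈ M_k there exists a point of M* whose k-th block is m_k, and similarly for N*. Then δ²(M*, N*) ≤ min over k of [δ²(M_k, N_k) + ∑_{j≠k} Δ²(M_j, N_j)], where Δ(A,B) = sup_{a∈A, b∈B} ‖a−b‖. -/

import Mathlib

/-!
Choose a closest pair `m ∈ M k`, `m' ∈ N k` (it exists by compactness) and lift them to points
`p ∈ M*`, `q ∈ N*` with `p k = m`, `q k = m'`. The squared Euclidean distance of `p` and `q` splits
over the blocks: block `k` contributes `δ²(M k, N k)` and every other block at most `Δ²(M j, N j)`.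
-/

/-- Minimum separation distance between two sets. -/
noncomputable def minSep {α : Type*} [PseudoMetricSpace α] (A B : Set α) : ℝ :=
  sInf (Set.image2 dist A B)

/-- Maximum separation distance between two sets. -/
noncomputable def maxSep {α : Type*} [PseudoMetricSpace α] (A B : Set α) : ℝ :=
  sSup (Set.image2 dist A B)

section Separation

variable {α : Type*} [PseudoMetricSpace α] {A B : Set α} {a b : α}

lemma minSep_nonneg (A B : Set α) : 0 ≤ minSep A B :=
  Real.sInf_nonneg <| Set.forall_mem_image2.2 fun _ _ _ _ => dist_nonneg

lemma minSep_le_dist (ha : a ∈ A) (hb : b ∈ B) : minSep A B ≤ dist a b :=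
  csInf_le ⟨0, Set.forall_mem_image2.2 fun _ _ _ _ => dist_nonneg⟩ (Set.mem_image2_of_mem ha hb)

lemma dist_le_maxSep (hA : Bornology.IsBounded A) (hB : Bornology.IsBounded B)
    (ha : a ∈ A) (hb : b ∈ B) : dist a b ≤ maxSep A B := by
  obtain ⟨C, hC⟩ := Metric.isBounded_iff.1 (hA.union hB)
  refine le_csSup ⟨C, Set.forall_mem_image2.2 fun x hx y hy => ?_⟩ (Set.mem_image2_of_mem ha hb)
  exact hC (Or.inl hx) (Or.inr hy)

lemma exists_dist_eq_minSep (hA : IsCompact A) (hB : IsCompact B) (hA' : A.Nonempty)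
    (hB' : B.Nonempty) : ∃ a ∈ A, ∃ b ∈ B, dist a b = minSep A B := by
  have hcompact : IsCompact (Set.image2 dist A B) := by
    rw [← Set.image_uncurry_prod]
    exact (hA.prod hB).image continuous_dist
  exact hcompact.sInf_mem (hA'.image2 hB')

end Separation

theorem joint_min_separation_upper_bound_general {J n : ℕ}
    (M N : Fin J → Set (EuclideanSpace ℝ (Fin n)))
    (Ms Ns : Set (PiLp 2 (fun _ : Fin J => EuclideanSpace ℝ (Fin n))))
    (hMsub : ∀ p ∈ Ms, ∀ j, p j ∈ M j) (hNsub : ∀ q ∈ Ns, ∀ j, q j ∈ N j)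
    (hMsurj : ∀ k : Fin J, ∀ m ∈ M k, ∃ p ∈ Ms, p k = m)
    (hNsurj : ∀ k : Fin J, ∀ m ∈ N k, ∃ q ∈ Ns, q k = m)
    (hMjc : ∀ j, IsCompact (M j)) (hNjc : ∀ j, IsCompact (N j))
    (hMjne : ∀ j, (M j).Nonempty) (hNjne : ∀ j, (N j).Nonempty) :
    ∀ k : Fin J, (minSep Ms Ns) ^ 2 ≤
      (minSep (M k) (N k)) ^ 2 + ∑ j ∈ Finset.univ.erase k, (maxSep (M j) (N j)) ^ 2 := by
  intro k
  obtain ⟨m, hm, m', hm', hmin⟩ := exists_dist_eq_minSep (hMjc k) (hNjc k) (hMjne k) (hNjne k)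
  obtain ⟨p, hp, rfl⟩ := hMsurj k m hm
  obtain ⟨q, hq, rfl⟩ := hNsurj k m' hm'
  calc minSep Ms Ns ^ 2 ≤ dist p q ^ 2 := by
        gcongr
        exacts [minSep_nonneg _ _, minSep_le_dist hp hq]
    _ = dist (p k) (q k) ^ 2 + ∑ j ∈ Finset.univ.erase k, dist (p j) (q j) ^ 2 := by
        rw [PiLp.dist_sq_eq_of_L2, ← Finset.add_sum_erase _ _ (Finset.mem_univ k)]
    _ ≤ _ := by
        rw [hmin]
        gcongr with j
        exact dist_le_maxSep (hMjc j).isBounded (hNjc j).isBounded (hMsub p hp j) (hNsub q hq j)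

theorem joint_min_separation_upper_bound {J n : ℕ}
    (M N : Fin J → Set (EuclideanSpace ℝ (Fin n)))
    (Ms Ns : Set (PiLp 2 (fun _ : Fin J => EuclideanSpace ℝ (Fin n))))
    (hMs : Ms.Nonempty) (hNs : Ns.Nonempty)
    (hMsub : ∀ p ∈ Ms, ∀ j, p j ∈ M j) (hNsub : ∀ q ∈ Ns, ∀ j, q j ∈ N j)
    (hMsurj : ∀ k : Fin J, ∀ m ∈ M k, ∃ p ∈ Ms, p k = m)
    (hNsurj : ∀ k : Fin J, ∀ m ∈ N k, ∃ q ∈ Ns, q k = m)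
    (hMc : IsCompact Ms) (hNc : IsCompact Ns)
    (hMjc : ∀ j, IsCompact (M j)) (hNjc : ∀ j, IsCompact (N j))
    (hMjne : ∀ j, (M j).Nonempty) (hNjne : ∀ j, (N j).Nonempty) :
    ∀ k : Fin J, (minSep Ms Ns) ^ 2 ≤
      (minSep (M k) (N k)) ^ 2 + ∑ j ∈ Finset.univ.erase k, (maxSep (M j) (N j)) ^ 2 :=
  joint_min_separation_upper_bound_general M N Ms Ns hMsub hNsub hMsurj hNsurj hMjc hNjc hMjne hNjne
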